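/- Under hypotheses (C1)–(C6), the operator T defined by Tu(t) := η1 γ1(t) h1[u] + η2 γ2(t) h2[u] + λ ∫₀¹ k(t,s) f(s, u(s), u'(s)) ds is a compact (completely continuous) map from P into P: T is continuous on P with respect to the C¹ norm, and T maps every bounded subset of P into a relatively compact subset of C¹[0,1]. -/

import Mathlib

/-!
Write `T p = h₁ p • η₁ Γ₁ + h₂ p • η₂ Γ₂ + λ 𝒦 (N p)`, where `Γᵢ = (γᵢ, γᵢ')`, `N p = f(·, u, u')`
is the superposition operator and `𝒦 g = (∫ k(·,s) g(s) ds, ∫ ∂ₜk(·,s) g(s) ds)`.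
Since `k(t,·)` and `∂ₜk(t,·)` are dominated by integrable functions, `t ↦ k(t,·)` is continuous
into `L¹`, so both kernel operators send bounded sets to equicontinuous, uniformly bounded ones:
they are compact operators on `C[0,1]` by Arzelà–Ascoli. Differentiating under the integral sign
shows that `𝒦 g` is a `C¹` function together with its derivative, non-negative for `g ≥ 0`; as
`P` is a convex cone, `T` maps `P` into `P`. Continuity of `T` follows from that of `h₁`, `h₂`,
`N` and `𝒦`, and `T` maps a bounded `B` into the continuous image of the compact set
`closure h₁(B) × closure h₂(B) × closure 𝒦(N(B))`.
-/

open MeasureTheory Set Bornology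

noncomputable section

/-- The interval `[0,1]`. -/
abbrev I01 : Set ℝ := Set.Icc 0 1

/-- The space `C[0,1] × C[0,1]`; an element of `C¹[0,1]` is encoded as the pair `(u, u')`.
The product norm is exactly `‖(u,u')‖ = max {‖u‖_∞, ‖u'‖_∞}`. -/
abbrev E := C(I01, ℝ) × C(I01, ℝ)

/-- The extension to `ℝ` of a continuous function on `[0,1]` (constant outside `[0,1]`). -/
def ext01 (g : C(I01, ℝ)) : ℝ → ℝ := Set.IccExtend zero_le_one ⇑g

/-- `p = (u, u')` encodes a `C¹` function: `u'` is the derivative of `u` on `[0,1]`. -/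
def IsC1 (p : E) : Prop :=
  ∀ t : I01, HasDerivWithinAt (ext01 p.1) (p.2 t) I01 (t : ℝ)

/-- The cone `P` of non-negative `C¹[0,1]` functions with non-negative derivative. -/
def coneP : Set E :=
  {p | IsC1 p ∧ ∀ t : I01, 0 ≤ p.1 t ∧ 0 ≤ p.2 t}

open Filter Topology

section ArzelaAscoli

variable {X : Type*} [TopologicalSpace X] [CompactSpace X]

theorem ContinuousMap.isCompact_closure_of_abs_le_of_equicontinuous (A : Set C(X, ℝ)) (M : ℝ)
    (hM : ∀ g ∈ A, ∀ x, |g x| ≤ M) (hA : Equicontinuous ((↑) : A → X → ℝ)) :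
    IsCompact (closure A) := by
  let e := ContinuousMap.isometryEquivBoundedOfCompact X ℝ
  have he : IsCompact (closure (e '' A)) := by
    refine BoundedContinuousFunction.arzela_ascoli (Icc (-M) M) isCompact_Icc _ ?_ ?_
    · rintro _ x ⟨g, hg, rfl⟩
      exact abs_le.1 (hM g hg x)
    · have hrange : range ((↑) : e '' A → X → ℝ) = range ((↑) : A → X → ℝ) := by
        ext φ
        simp only [mem_range, Subtype.exists, mem_image, exists_prop, exists_exists_and_eq_and]
        rfl
      rwa [equicontinuous_iff_range, hrange, ← equicontinuous_iff_range]
  rwa [← e.toHomeomorph.isCompact_preimage, e.toHomeomorph.preimage_closure,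
    IsometryEquiv.coe_toHomeomorph, preimage_image_eq _ e.injective] at he

end ArzelaAscoli

section KernelOperator

theorem ContinuousMap.norm_mul_apply_le_of_abs_le {Y : Type*} [TopologicalSpace Y] [CompactSpace Y]
    {a A : ℝ} (h : |a| ≤ A) (g : C(Y, ℝ)) (y : Y) : ‖a * g y‖ ≤ A * ‖g‖ := by
  rw [norm_mul, Real.norm_eq_abs]
  exact mul_le_mul h (g.norm_coe_le_norm y) (norm_nonneg _) ((abs_nonneg _).trans h)

variable {X Y : Type*} [TopologicalSpace X] [MeasurableSpace Y] {μ : Measure Y}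

theorem abs_integral_mul_le_integral_abs_mul_norm [TopologicalSpace Y] [CompactSpace Y]
    {h : Y → ℝ} (hh : Integrable h μ) (g : C(Y, ℝ)) :
    |∫ y, h y * g y ∂μ| ≤ (∫ y, |h y| ∂μ) * ‖g‖ := by
  rw [← integral_mul_const, ← Real.norm_eq_abs]
  exact norm_integral_le_of_norm_le (hh.abs.mul_const _)
    (ae_of_all _ fun y => g.norm_mul_apply_le_of_abs_le le_rfl y)

structure IsDominatedKernel (κ : X → Y → ℝ) (Φ : Y → ℝ) (μ : Measure Y) : Prop where
  aestronglyMeasurable : ∀ x, AEStronglyMeasurable (κ x) μ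
  ae_continuous : ∀ᵐ y ∂μ, Continuous (κ · y)
  ae_abs_le : ∀ᵐ y ∂μ, ∀ x, |κ x y| ≤ Φ y
  integrable : Integrable Φ μ

namespace IsDominatedKernel

variable {κ : X → Y → ℝ} {Φ : Y → ℝ} (hκ : IsDominatedKernel κ Φ μ)
include hκ

theorem integrable_apply (x : X) : Integrable (κ x) μ :=
  hκ.integrable.mono' (hκ.aestronglyMeasurable x) (hκ.ae_abs_le.mono fun _ h => h x)

theorem integral_abs_apply_le (x : X) : ∫ y, |κ x y| ∂μ ≤ ∫ y, Φ y ∂μ :=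
  integral_mono_ae (hκ.integrable_apply x).abs hκ.integrable (hκ.ae_abs_le.mono fun _ h => h x)

variable [TopologicalSpace Y] [OpensMeasurableSpace Y] [CompactSpace Y]

theorem integrable_mul (x : X) (g : C(Y, ℝ)) : Integrable (fun y => κ x y * g y) μ :=
  (hκ.integrable_apply x).mul_bdd g.continuous.aestronglyMeasurable
    (ae_of_all _ g.norm_coe_le_norm)

variable [FirstCountableTopology X]

omit [TopologicalSpace Y] [OpensMeasurableSpace Y] [CompactSpace Y] in
theorem tendsto_integral_abs_sub (x₀ : X) :
    Tendsto (fun x => ∫ y, |κ x y - κ x₀ y| ∂μ) (𝓝 x₀) (𝓝 0) := by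
  have hcont : Continuous fun x => ∫ y, |κ x y - κ x₀ y| ∂μ := by
    refine continuous_of_dominated (bound := fun y => Φ y + Φ y)
      (fun x => ((hκ.aestronglyMeasurable x).sub (hκ.aestronglyMeasurable x₀)).norm)
      (fun x => hκ.ae_abs_le.mono fun y h => ?_) (hκ.integrable.add hκ.integrable)
      (hκ.ae_continuous.mono fun y h => by fun_prop)
    rw [Real.norm_eq_abs, abs_abs]
    exact (abs_sub _ _).trans (add_le_add (h x) (h x₀))
  simpa using hcont.tendsto x₀

theorem continuous_integral_mul (g : C(Y, ℝ)) : Continuous fun x => ∫ y, κ x y * g y ∂μ := by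
  refine continuous_of_dominated (bound := fun y => Φ y * ‖g‖)
    (fun x => (hκ.aestronglyMeasurable x).mul g.continuous.aestronglyMeasurable)
    (fun x => hκ.ae_abs_le.mono fun y h => ?_) (hκ.integrable.mul_const _)
    (hκ.ae_continuous.mono fun y h => by fun_prop)
  exact g.norm_mul_apply_le_of_abs_le (h x) y

omit hκ in
def kernelOperator (hκ : IsDominatedKernel κ Φ μ) : C(Y, ℝ) →ₗ[ℝ] C(X, ℝ) where
  toFun g := ⟨fun x => ∫ y, κ x y * g y ∂μ, hκ.continuous_integral_mul g⟩
  map_add' g g' := by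
    ext x
    simp [mul_add, integral_add (hκ.integrable_mul x g) (hκ.integrable_mul x g')]
  map_smul' c g := by
    ext x
    simp [mul_left_comm _ c, integral_const_mul]

@[simp]
theorem kernelOperator_apply (g : C(Y, ℝ)) (x : X) :
    hκ.kernelOperator g x = ∫ y, κ x y * g y ∂μ := rfl

theorem kernelOperator_nonneg (hκ₀ : ∀ᵐ y ∂μ, ∀ x, 0 ≤ κ x y) {g : C(Y, ℝ)} (hg : ∀ y, 0 ≤ g y)
    (x : X) : 0 ≤ hκ.kernelOperator g x :=
  integral_nonneg_of_ae (hκ₀.mono fun y h => mul_nonneg (h x) (hg y))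

theorem abs_kernelOperator_apply_le (g : C(Y, ℝ)) (x : X) :
    |hκ.kernelOperator g x| ≤ (∫ y, Φ y ∂μ) * ‖g‖ :=
  (abs_integral_mul_le_integral_abs_mul_norm (hκ.integrable_apply x) g).trans
    (mul_le_mul_of_nonneg_right (hκ.integral_abs_apply_le x) (norm_nonneg g))

theorem equicontinuous_kernelOperator_image_closedBall (r : ℝ) :
    Equicontinuous ((↑) : hκ.kernelOperator '' Metric.closedBall 0 r → X → ℝ) := by
  intro x₀
  rw [Metric.equicontinuousAt_iff_right]
  intro ε hε
  have hr : Tendsto (fun x => (∫ y, |κ x y - κ x₀ y| ∂μ) * r) (𝓝 x₀) (𝓝 0) := by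
    simpa using (hκ.tendsto_integral_abs_sub x₀).mul_const r
  filter_upwards [hr.eventually_lt_const hε] with x hx
  rintro ⟨_, g, hg, rfl⟩
  rw [Real.dist_eq, abs_sub_comm]
  refine lt_of_le_of_lt ?_ hx
  have hdiff := abs_integral_mul_le_integral_abs_mul_norm
    ((hκ.integrable_apply x).sub (hκ.integrable_apply x₀)) g
  simp only [Pi.sub_apply, sub_mul] at hdiff
  rw [integral_sub (hκ.integrable_mul x g) (hκ.integrable_mul x₀ g)] at hdiff
  exact hdiff.trans (mul_le_mul_of_nonneg_left (mem_closedBall_zero_iff.1 hg)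
    (integral_nonneg fun _ => abs_nonneg _))

theorem isCompactOperator_kernelOperator [CompactSpace X] :
    IsCompactOperator hκ.kernelOperator := by
  refine (isCompactOperator_iff_image_closedBall_subset_compact _ one_pos).2
    ⟨_, ContinuousMap.isCompact_closure_of_abs_le_of_equicontinuous _ ((∫ y, Φ y ∂μ) * 1) ?_
      (hκ.equicontinuous_kernelOperator_image_closedBall 1), subset_closure⟩
  rintro _ ⟨g, hg, rfl⟩ x
  exact (hκ.abs_kernelOperator_apply_le g x).trans
    (mul_le_mul_of_nonneg_left (mem_closedBall_zero_iff.1 hg)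
      (integral_nonneg_of_ae (hκ.ae_abs_le.mono fun _ h => (abs_nonneg _).trans (h x))))

end IsDominatedKernel

end KernelOperator

section Superposition

variable {X : Type*} [TopologicalSpace X]

def superposition (F : C(X × ℝ × ℝ, ℝ)) (p : C(X, ℝ) × C(X, ℝ)) : C(X, ℝ) :=
  ⟨fun x => F (x, p.1 x, p.2 x), by fun_prop⟩

@[simp]
theorem superposition_apply (F : C(X × ℝ × ℝ, ℝ)) (p : C(X, ℝ) × C(X, ℝ)) (x : X) :
    superposition F p x = F (x, p.1 x, p.2 x) := rfl

variable [CompactSpace X]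

theorem continuous_superposition (F : C(X × ℝ × ℝ, ℝ)) : Continuous (superposition F) :=
  ContinuousMap.continuous_of_continuous_uncurry _ <| by
    simp only [superposition_apply]; fun_prop

theorem isBounded_image_superposition (F : C(X × ℝ × ℝ, ℝ)) {B : Set (C(X, ℝ) × C(X, ℝ))}
    (hB : IsBounded B) : IsBounded (superposition F '' B) := by
  obtain ⟨R, hR⟩ := hB.subset_closedBall 0
  obtain ⟨C, hC⟩ := (isCompact_univ.prod ((isCompact_closedBall (0 : ℝ) R).prod
    (isCompact_closedBall (0 : ℝ) R))).exists_bound_of_continuousOn F.continuous.continuousOn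
  refine isBounded_iff_forall_norm_le.2 ⟨max C 0, ?_⟩
  rintro _ ⟨p, hp, rfl⟩
  have hpR : ‖p‖ ≤ R := mem_closedBall_zero_iff.1 (hR hp)
  refine (ContinuousMap.norm_le _ (le_max_right _ _)).2 fun x => (hC _ ⟨mem_univ x, ?_, ?_⟩).trans
    (le_max_left _ _)
  · exact mem_closedBall_zero_iff.2 ((p.1.norm_coe_le_norm x).trans ((norm_fst_le p).trans hpR))
  · exact mem_closedBall_zero_iff.2 ((p.2.norm_coe_le_norm x).trans ((norm_snd_le p).trans hpR))

end Superposition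

section DifferentiationUnderIntegral

variable {Y E : Type*} [MeasurableSpace Y] {μ : Measure Y} [NormedAddCommGroup E]
  [NormedSpace ℝ E] {F : ℝ → Y → E} {s : Set ℝ} {t₀ : ℝ}

theorem aestronglyMeasurable_of_hasDerivWithinAt {F' : Y → E}
    (hF : ∀ t, AEStronglyMeasurable (F t) μ) (ht₀ : AccPt t₀ (𝓟 s))
    (hF' : ∀ᵐ y ∂μ, HasDerivWithinAt (F · y) (F' y) s t₀) : AEStronglyMeasurable F' μ := by
  have : (𝓝[s \ {t₀}] t₀).NeBot := accPt_principal_iff_clusterPt.1 ht₀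
  refine aestronglyMeasurable_of_tendsto_ae (𝓝[s \ {t₀}] t₀) (fun t => ?_)
    (hF'.mono fun y h => hasDerivWithinAt_iff_tendsto_slope.1 h)
  simp only [slope_def_module]
  exact ((hF t).sub (hF t₀)).const_smul _

theorem hasDerivWithinAt_integral_of_convex [CompleteSpace E] {F' : ℝ → Y → E} {bound : Y → ℝ}
    (hs : Convex ℝ s) (ht₀ : t₀ ∈ s) (hF_int : ∀ t ∈ s, Integrable (F t) μ)
    (hF' : ∀ᵐ y ∂μ, ∀ t ∈ s, HasDerivWithinAt (F · y) (F' t y) s t)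
    (h_bound : ∀ᵐ y ∂μ, ∀ t ∈ s, ‖F' t y‖ ≤ bound y) (h_int : Integrable bound μ) :
    HasDerivWithinAt (fun t => ∫ y, F t y ∂μ) (∫ y, F' t₀ y ∂μ) s t₀ := by
  rw [hasDerivWithinAt_iff_tendsto_slope]
  have hmem : ∀ᶠ t in 𝓝[s \ {t₀}] t₀, t ∈ s \ {t₀} := self_mem_nhdsWithin
  refine (tendsto_integral_filter_of_dominated_convergence (F := fun t y => slope (F · y) t₀ t)
    bound ?_ ?_ h_int ?_).congr' ?_
  · filter_upwards [hmem] with t ht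
    simp only [slope_def_module]
    exact ((hF_int t ht.1).sub (hF_int t₀ ht₀)).aestronglyMeasurable.const_smul _
  · filter_upwards [hmem] with t ht
    filter_upwards [hF', h_bound] with y hy hyb
    have hne : t - t₀ ≠ 0 := sub_ne_zero.2 ht.2
    rw [slope_def_module, norm_smul, norm_inv, inv_mul_le_iff₀ (norm_pos_iff.2 hne), mul_comm]
    exact hs.norm_image_sub_le_of_norm_hasDerivWithin_le hy hyb ht₀ ht.1
  · filter_upwards [hF'] with y hy
    exact hasDerivWithinAt_iff_tendsto_slope.1 (hy t₀ ht₀)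
  · filter_upwards [hmem] with t ht
    simp only [slope_def_module]
    rw [integral_smul, integral_sub (hF_int t ht.1) (hF_int t₀ ht₀)]

theorem IsDominatedKernel.hasDerivWithinAt_integral_mul [TopologicalSpace Y]
    [OpensMeasurableSpace Y] [CompactSpace Y] (hs : Convex ℝ s) {k kt : ℝ → Y → ℝ} {Φ Ψ : Y → ℝ}
    (hk : IsDominatedKernel (fun (t : s) y => k t y) Φ μ)
    (hkt : IsDominatedKernel (fun (t : s) y => kt t y) Ψ μ)
    (hderiv : ∀ᵐ y ∂μ, ∀ t ∈ s, HasDerivWithinAt (k · y) (kt t y) s t) (g : C(Y, ℝ)) {t : ℝ}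
    (ht : t ∈ s) :
    HasDerivWithinAt (fun x => ∫ y, k x y * g y ∂μ) (∫ y, kt t y * g y ∂μ) s t :=
  hasDerivWithinAt_integral_of_convex (bound := fun y => Ψ y * ‖g‖) hs ht
    (fun x hx => hk.integrable_mul ⟨x, hx⟩ g)
    (hderiv.mono fun y h x hx => (h x hx).mul_const (g y))
    (hkt.ae_abs_le.mono fun y h x hx => g.norm_mul_apply_le_of_abs_le (h ⟨x, hx⟩) y)
    (hkt.integrable.mul_const _)

end DifferentiationUnderIntegral

section CompactOperators

theorem IsCompactOperator.prodMk {M₁ M₂ M₃ : Type*} [TopologicalSpace M₁] [Zero M₁]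
    [TopologicalSpace M₂] [TopologicalSpace M₃] {f : M₁ → M₂} {g : M₁ → M₃}
    (hf : IsCompactOperator f) (hg : IsCompactOperator g) :
    IsCompactOperator fun x => (f x, g x) := by
  obtain ⟨K, hK, hfK⟩ := hf
  obtain ⟨L, hL, hgL⟩ := hg
  exact ⟨K ×ˢ L, hK.prod hL, inter_mem hfK hgL⟩

theorem isCompact_closure_image_smul_add_smul_add {Z V W : Type*} [NormedAddCommGroup V]
    [NormedSpace ℝ V] [NormedAddCommGroup W] [NormedSpace ℝ W] {a b : Z → ℝ} (v₁ v₂ : V)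
    {K : W →ₗ[ℝ] V} (hK : IsCompactOperator K) {N : Z → W} {B : Set Z}
    (ha : IsBounded (a '' B)) (hb : IsBounded (b '' B)) (hN : IsBounded (N '' B)) :
    IsCompact (closure ((fun p => a p • v₁ + b p • v₂ + K (N p)) '' B)) := by
  have hS : IsCompact (closure (a '' B) ×ˢ closure (b '' B) ×ˢ closure (K '' (N '' B))) :=
    ha.isCompact_closure.prod (hb.isCompact_closure.prod (hK.isCompact_closure_image_of_bounded hN))
  have hφ : IsCompact ((fun q : ℝ × ℝ × V => q.1 • v₁ + q.2.1 • v₂ + q.2.2) '' _) :=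
    hS.image (by fun_prop)
  refine hφ.of_isClosed_subset isClosed_closure (closure_minimal ?_ hφ.isClosed)
  rintro _ ⟨p, hp, rfl⟩
  exact ⟨(a p, b p, K (N p)), ⟨subset_closure (mem_image_of_mem a hp),
    subset_closure (mem_image_of_mem b hp), subset_closure ⟨N p, mem_image_of_mem N hp, rfl⟩⟩, rfl⟩

end CompactOperators

section UnitInterval

theorem integral_I01_eq_intervalIntegral (G : ℝ → ℝ) :
    ∫ s : I01, G s = ∫ s in (0 : ℝ)..1, G s := by
  rw [integral_subtype measurableSet_Icc, integral_Icc_eq_integral_Ioc,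
    intervalIntegral.integral_of_le zero_le_one]

theorem ext01_add (g g' : C(I01, ℝ)) : ext01 (g + g') = ext01 g + ext01 g' := rfl

theorem ext01_smul (c : ℝ) (g : C(I01, ℝ)) : ext01 (c • g) = c • ext01 g := rfl

theorem IsC1.add {p q : E} (hp : IsC1 p) (hq : IsC1 q) : IsC1 (p + q) := fun t => by
  rw [Prod.fst_add, Prod.snd_add, ext01_add, ContinuousMap.add_apply]
  exact (hp t).add (hq t)

theorem IsC1.const_smul {p : E} (c : ℝ) (hp : IsC1 p) : IsC1 (c • p) := fun t => by
  rw [Prod.smul_fst, Prod.smul_snd, ext01_smul, ContinuousMap.smul_apply]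
  exact (hp t).const_smul c

theorem add_mem_coneP {p q : E} (hp : p ∈ coneP) (hq : q ∈ coneP) : p + q ∈ coneP :=
  ⟨hp.1.add hq.1, fun t => ⟨add_nonneg (hp.2 t).1 (hq.2 t).1, add_nonneg (hp.2 t).2 (hq.2 t).2⟩⟩

theorem smul_mem_coneP {p : E} {c : ℝ} (hc : 0 ≤ c) (hp : p ∈ coneP) : c • p ∈ coneP :=
  ⟨hp.1.const_smul c, fun t => ⟨mul_nonneg hc (hp.2 t).1, mul_nonneg hc (hp.2 t).2⟩⟩

theorem isC1_of_hasDerivWithinAt {p : E} {φ : ℝ → ℝ} (hφ : ∀ t : I01, p.1 t = φ t)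
    (hφ' : ∀ t : I01, HasDerivWithinAt φ (p.2 t) I01 t) : IsC1 p := fun t =>
  (hφ' t).congr (fun x hx => by rw [ext01, IccExtend_of_mem _ _ hx, hφ])
    (by rw [ext01, IccExtend_val, hφ])

theorem exists_mem_coneP_of_hasDerivWithinAt {γ γ' : ℝ → ℝ}
    (hγ : ∀ t ∈ I01, HasDerivWithinAt γ (γ' t) I01 t) (hγ' : ContinuousOn γ' I01)
    (hγ₀ : ∀ t ∈ I01, 0 ≤ γ t ∧ 0 ≤ γ' t) :
    ∃ Γ ∈ coneP, (∀ t : I01, Γ.1 t = γ t) ∧ ∀ t : I01, Γ.2 t = γ' t := by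
  have hγc : ContinuousOn γ I01 := fun t ht => (hγ t ht).continuousWithinAt
  exact ⟨(⟨_, hγc.domRestrict⟩, ⟨_, hγ'.domRestrict⟩),
    ⟨isC1_of_hasDerivWithinAt (fun _ => rfl) fun t => hγ t t.2, fun t => hγ₀ t t.2⟩,
    fun _ => rfl, fun _ => rfl⟩

theorem isDominatedKernel_of_restrict {κ : ℝ → ℝ → ℝ} {Φ : ℝ → ℝ}
    (hmeas : ∀ t : I01, AEStronglyMeasurable (fun s : I01 => κ t s))
    (hcont : ∀ᵐ s ∂(volume.restrict I01), ContinuousOn (κ · s) I01)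
    (hbound : ∀ᵐ s ∂(volume.restrict I01), ∀ t ∈ I01, 0 ≤ κ t s ∧ κ t s ≤ Φ s)
    (hΦ : IntegrableOn Φ I01) :
    IsDominatedKernel (fun t s : I01 => κ t s) (fun s : I01 => Φ s) volume where
  aestronglyMeasurable := hmeas
  ae_continuous :=
    ((ae_restrict_iff_subtype measurableSet_Icc).1 hcont).mono fun _ h => h.domRestrict
  ae_abs_le := ((ae_restrict_iff_subtype measurableSet_Icc).1 hbound).mono fun _ h t => by
    rw [abs_of_nonneg (h t t.2).1]
    exact (h t t.2).2
  integrable := (integrableOn_iff_comap_subtypeVal measurableSet_Icc).1 hΦ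

theorem exists_isDominatedKernel_prod_mem_coneP {k kt : ℝ → ℝ → ℝ} {Φ Ψ : ℝ → ℝ}
    (hk_meas : Measurable (Function.uncurry k))
    (hk_cont : ∀ᵐ s ∂(volume.restrict I01), ContinuousOn (fun t => k t s) I01)
    (hk_nonneg : ∀ t ∈ I01, ∀ s ∈ I01, 0 ≤ k t s)
    (hΦ : IntegrableOn Φ I01)
    (hkΦ : ∀ᵐ s ∂(volume.restrict I01), ∀ t ∈ I01, k t s ≤ Φ s)
    (hkt : ∀ᵐ s ∂(volume.restrict I01),
      (∀ t ∈ I01, HasDerivWithinAt (fun x => k x s) (kt t s) I01 t) ∧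
      ContinuousOn (fun t => kt t s) I01 ∧
      ∀ t ∈ I01, 0 ≤ kt t s ∧ kt t s ≤ Ψ s)
    (hΨ : IntegrableOn Ψ I01) :
    ∃ (hK : IsDominatedKernel (fun t s : I01 => k t s) (fun s : I01 => Φ s) volume)
      (hL : IsDominatedKernel (fun t s : I01 => kt t s) (fun s : I01 => Ψ s) volume),
      ∀ g : C(I01, ℝ), (∀ s, 0 ≤ g s) → hK.kernelOperator.prod hL.kernelOperator g ∈ coneP := by
  have hk_sec : ∀ t : ℝ, Measurable fun s : I01 => k t s :=
    fun t => hk_meas.comp (measurable_const.prodMk measurable_subtype_coe)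
  have hK := isDominatedKernel_of_restrict (fun t => (hk_sec t).aestronglyMeasurable) hk_cont
    (by filter_upwards [hkΦ, ae_restrict_mem measurableSet_Icc] with s hs hsI t ht
        exact ⟨hk_nonneg t ht s hsI, hs t ht⟩) hΦ
  have hkt_sub := (ae_restrict_iff_subtype measurableSet_Icc).1 hkt
  -- `kt t` is measurable as an a.e. limit of difference quotients of `k`.
  have hL := isDominatedKernel_of_restrict (fun t => aestronglyMeasurable_of_hasDerivWithinAt
      (fun x => (hk_sec x).aestronglyMeasurable) (uniqueDiffOn_Icc zero_lt_one t t.2).accPt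
      (hkt_sub.mono fun _ h => h.1 t t.2)) (hkt.mono fun _ h => h.2.1)
    (hkt.mono fun _ h => h.2.2) hΨ
  refine ⟨hK, hL, fun g hg => ⟨isC1_of_hasDerivWithinAt (fun _ => rfl) fun t =>
    hK.hasDerivWithinAt_integral_mul (convex_Icc 0 1) hL (hkt_sub.mono fun _ h => h.1) g t.2,
    fun t => ⟨hK.kernelOperator_nonneg ?_ hg t, hL.kernelOperator_nonneg ?_ hg t⟩⟩⟩
  · exact ae_of_all _ fun s t => hk_nonneg t t.2 s s.2
  · exact hkt_sub.mono fun s h t => (h.2.2 t t.2).1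

/-- `f` is only given on `[0,1] × [0,∞)²`; clamping the last two arguments at `0` extends it
continuously to `[0,1] × ℝ²` without changing it on the cone. -/
def clampNonneg (f : ℝ → ℝ → ℝ → ℝ)
    (hf : ContinuousOn (fun x : ℝ × ℝ × ℝ => f x.1 x.2.1 x.2.2) (I01 ×ˢ Ici 0 ×ˢ Ici 0)) :
    C(I01 × ℝ × ℝ, ℝ) :=
  ⟨fun x => f x.1 (max x.2.1 0) (max x.2.2 0),
    hf.comp_continuous (f := fun x : I01 × ℝ × ℝ => ((x.1 : ℝ), max x.2.1 0, max x.2.2 0))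
      (by fun_prop) fun x =>
      ⟨x.1.2, mem_Ici.2 (le_max_right _ _), mem_Ici.2 (le_max_right _ _)⟩⟩

theorem superposition_clampNonneg_apply {f : ℝ → ℝ → ℝ → ℝ}
    (hf : ContinuousOn (fun x : ℝ × ℝ × ℝ => f x.1 x.2.1 x.2.2) (I01 ×ˢ Ici 0 ×ˢ Ici 0))
    {p : E} (hp : p ∈ coneP) (s : I01) :
    superposition (clampNonneg f hf) p s = f s (p.1 s) (p.2 s) := by
  simp [clampNonneg, (hp.2 s).1, (hp.2 s).2]

end UnitInterval

/-- Under (C₁)–(C₆), the operator `T` is a compact (completely continuous) map from `P` into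
`P`: it is continuous on `P` for the `C¹` norm and maps bounded subsets of `P` into relatively
compact subsets of `C¹[0,1]`. -/
theorem T_is_compact
    (k kt : ℝ → ℝ → ℝ) (Φ Ψ : ℝ → ℝ) (f : ℝ → ℝ → ℝ → ℝ)
    (γ₁ γ₂ γ₁' γ₂' : ℝ → ℝ) (η₁ η₂ lam : ℝ) (h₁ h₂ : E → ℝ)
    -- (C₁)
    (hk_meas : Measurable (Function.uncurry k))
    (hk_cont : ∀ᵐ s ∂(volume.restrict I01), ContinuousOn (fun t => k t s) I01)
    (hk_nonneg : ∀ t ∈ I01, ∀ s ∈ I01, 0 ≤ k t s)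
    (hΦ : IntegrableOn Φ I01)
    (hkΦ : ∀ᵐ s ∂(volume.restrict I01), ∀ t ∈ I01, k t s ≤ Φ s)
    -- (C₂)
    (hkt : ∀ᵐ s ∂(volume.restrict I01),
      (∀ t ∈ I01, HasDerivWithinAt (fun x => k x s) (kt t s) I01 t) ∧
      ContinuousOn (fun t => kt t s) I01 ∧
      ∀ t ∈ I01, 0 ≤ kt t s ∧ kt t s ≤ Ψ s)
    (hΨ : IntegrableOn Ψ I01)
    -- (C₃)
    (hf_cont : ContinuousOn (fun x : ℝ × ℝ × ℝ => f x.1 x.2.1 x.2.2)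
      (I01 ×ˢ Ici (0:ℝ) ×ˢ Ici (0:ℝ)))
    (hf_nonneg : ∀ t ∈ I01, ∀ u ∈ Ici (0:ℝ), ∀ v ∈ Ici (0:ℝ), 0 ≤ f t u v)
    -- (C₄)
    (hγ₁ : ∀ t ∈ I01, HasDerivWithinAt γ₁ (γ₁' t) I01 t)
    (hγ₂ : ∀ t ∈ I01, HasDerivWithinAt γ₂ (γ₂' t) I01 t)
    (hγ₁'c : ContinuousOn γ₁' I01) (hγ₂'c : ContinuousOn γ₂' I01)
    (hγ_nonneg : ∀ t ∈ I01, 0 ≤ γ₁ t ∧ 0 ≤ γ₂ t ∧ 0 ≤ γ₁' t ∧ 0 ≤ γ₂' t)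
    -- (C₅)
    (hη₁ : 0 ≤ η₁) (hη₂ : 0 ≤ η₂) (hlam : 0 ≤ lam)
    -- (C₆)
    (hh₁_nonneg : ∀ p ∈ coneP, 0 ≤ h₁ p) (hh₂_nonneg : ∀ p ∈ coneP, 0 ≤ h₂ p)
    (hh₁_cont : ContinuousOn h₁ coneP) (hh₂_cont : ContinuousOn h₂ coneP)
    (hh₁_bdd : ∀ B ⊆ coneP, IsBounded B → IsBounded (h₁ '' B))
    (hh₂_bdd : ∀ B ⊆ coneP, IsBounded B → IsBounded (h₂ '' B)) :
    ∃ T : E → E,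
      (∀ p ∈ coneP,
        (∀ t : I01, (T p).1 t = η₁ * γ₁ (t : ℝ) * h₁ p + η₂ * γ₂ (t : ℝ) * h₂ p +
          lam * ∫ s in (0:ℝ)..1, k (t : ℝ) s * f s (ext01 p.1 s) (ext01 p.2 s)) ∧
        (∀ t : I01, (T p).2 t = η₁ * γ₁' (t : ℝ) * h₁ p + η₂ * γ₂' (t : ℝ) * h₂ p +
          lam * ∫ s in (0:ℝ)..1, kt (t : ℝ) s * f s (ext01 p.1 s) (ext01 p.2 s))) ∧
      MapsTo T coneP coneP ∧
      ContinuousOn T coneP ∧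
      ∀ B ⊆ coneP, IsBounded B → IsCompact (closure (T '' B)) := by
  obtain ⟨hK, hL, hKL⟩ :=
    exists_isDominatedKernel_prod_mem_coneP hk_meas hk_cont hk_nonneg hΦ hkΦ hkt hΨ
  obtain ⟨Γ₁, hΓ₁, hΓ₁_fst, hΓ₁_snd⟩ := exists_mem_coneP_of_hasDerivWithinAt hγ₁ hγ₁'c
    fun t ht => ⟨(hγ_nonneg t ht).1, (hγ_nonneg t ht).2.2.1⟩
  obtain ⟨Γ₂, hΓ₂, hΓ₂_fst, hΓ₂_snd⟩ := exists_mem_coneP_of_hasDerivWithinAt hγ₂ hγ₂'c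
    fun t ht => ⟨(hγ_nonneg t ht).2.1, (hγ_nonneg t ht).2.2.2⟩
  set N := superposition (clampNonneg f hf_cont)
  have hN : ∀ p ∈ coneP, ∀ s : I01, N p s = f s (p.1 s) (p.2 s) :=
    fun p hp => superposition_clampNonneg_apply hf_cont hp
  set 𝒦 := lam • hK.kernelOperator.prod hL.kernelOperator
  have h𝒦 : IsCompactOperator 𝒦 :=
    (hK.isCompactOperator_kernelOperator.prodMk hL.isCompactOperator_kernelOperator).smul lam
  refine ⟨fun p => h₁ p • η₁ • Γ₁ + h₂ p • η₂ • Γ₂ + 𝒦 (N p),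
    fun p hp => ⟨fun t => ?_, fun t => ?_⟩, fun p hp => ?_, ?_, fun B hB hBb => ?_⟩
  · simp only [𝒦, LinearMap.smul_apply, LinearMap.prod_apply, Function.prod_apply,
      Prod.smul_mk, Prod.fst_add, Prod.smul_fst, ContinuousMap.add_apply, ContinuousMap.coe_smul,
      Pi.smul_apply, smul_eq_mul, hΓ₁_fst, hΓ₂_fst, IsDominatedKernel.kernelOperator_apply,
      hN p hp, ext01, IccExtend_val, ← integral_I01_eq_intervalIntegral]
    ring
  · simp only [𝒦, LinearMap.smul_apply, LinearMap.prod_apply, Function.prod_apply,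
      Prod.smul_mk, Prod.snd_add, Prod.smul_snd, ContinuousMap.add_apply, ContinuousMap.coe_smul,
      Pi.smul_apply, smul_eq_mul, hΓ₁_snd, hΓ₂_snd, IsDominatedKernel.kernelOperator_apply,
      hN p hp, ext01, IccExtend_val, ← integral_I01_eq_intervalIntegral]
    ring
  · refine add_mem_coneP (add_mem_coneP ?_ ?_) (smul_mem_coneP hlam (hKL _ fun s => ?_))
    · exact smul_mem_coneP (hh₁_nonneg p hp) (smul_mem_coneP hη₁ hΓ₁)
    · exact smul_mem_coneP (hh₂_nonneg p hp) (smul_mem_coneP hη₂ hΓ₂)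
    · exact hN p hp s ▸ hf_nonneg s s.2 _ (hp.2 s).1 _ (hp.2 s).2
  · exact ((hh₁_cont.smul continuousOn_const).add (hh₂_cont.smul continuousOn_const)).add
      (h𝒦.continuous.comp_continuousOn (continuous_superposition _).continuousOn)
  · exact isCompact_closure_image_smul_add_smul_add _ _ h𝒦 (hh₁_bdd B hB hBb) (hh₂_bdd B hB hBb)
      (isBounded_image_superposition _ hBb)
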